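/- arXiv:2212.09542 — 2 statements merged into one kernel-verified Lean document; each statement's English description precedes it below -/
import Mathlib

section
/- Let ξ̄ : ℝ → ℝ be Lipschitz continuous, nondecreasing, bounded from below, and convex. Then for every μ ∈ C, the infimum defining 𝖧(μ) is attained at μ itself: inf{ ∫₀¹ ξ̄( ν(s) ) ds : ν ∈ C, ν − μ ∈ C* } = ∫₀¹ ξ̄( μ(s) ) ds. -/
open MeasureTheory

/-- Lebesgue measure restricted to `[0,1)`. -/
noncomputable def mu0 : Measure ℝ := volume.restrict (Set.Ico (0 : ℝ) 1)

/-- The Hilbert space `H = L²([0,1))`. -/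
noncomputable abbrev Hsp : Type := Lp ℝ 2 mu0

/-- The cone `C ⊂ H` of (classes of) functions with a nondecreasing nonnegative
representative on `[0,1)`. -/
def coneC : Set Hsp :=
  {f | ∃ g : ℝ → ℝ, MonotoneOn g (Set.Ico 0 1) ∧ (∀ x ∈ Set.Ico (0 : ℝ) 1, 0 ≤ g x) ∧
    (f : ℝ → ℝ) =ᵐ[mu0] g}

/-- The dual cone `C*` of `C` in `H`. -/
noncomputable def dualC : Set Hsp := {ι | ∀ ρ ∈ coneC, 0 ≤ inner (𝕜 := ℝ) ι ρ}

/-- The regularized nonlinearity `𝖧(ι) = inf { ∫₀¹ ξ̄(ν(s)) ds : ν ∈ C, ν - ι ∈ C* }`,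
valued in `ℝ ∪ {+∞}` (the infimum of the empty set being `+∞`). -/
noncomputable def HH (ξb : ℝ → ℝ) (ι : Hsp) : EReal :=
  sInf {x : EReal | ∃ ν ∈ coneC, ν - ι ∈ dualC ∧ x = ((∫ s, ξb (ν s) ∂mu0 : ℝ) : EReal)}
/-! A convex nondecreasing `ξ̄` lies above its tangent lines built from the right derivative
`ξ̄'₊`: `ξ̄ ν ≥ ξ̄ μ + ξ̄'₊(μ) (ν - μ)`. Since `ξ̄'₊` is nondecreasing, nonnegative and bounded
(by the Lipschitz constant), `ξ̄'₊ ∘ μ` lies in `C` whenever `μ` does, so for `ν - μ ∈ C*`,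
integrating the tangent inequality gives
`∫ ξ̄ ν - ∫ ξ̄ μ ≥ ⟨ν - μ, ξ̄'₊ ∘ μ⟩ ≥ 0`. With `ν = μ` admissible, the infimum is attained at `μ`. -/

open Set

namespace ConvexOn

variable {f : ℝ → ℝ}

theorem add_rightDeriv_mul_sub_le {S : Set ℝ} (hf : ConvexOn ℝ S f) {a b : ℝ}
    (ha : a ∈ interior S) (hb : b ∈ S) : f a + derivWithin f (Ioi a) a * (b - a) ≤ f b := by
  rcases lt_trichotomy a b with hab | rfl | hba
  · have h := hf.rightDeriv_le_slope_of_mem_interior ha hb hab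
    rw [slope_def_field, le_div_iff₀ (sub_pos.2 hab)] at h
    linarith
  · simp
  · have h := hf.slope_le_leftDeriv_of_mem_interior hb ha hba
    rw [slope_def_field, div_le_iff₀ (sub_pos.2 hba)] at h
    nlinarith [hf.leftDeriv_le_rightDeriv_of_mem_interior ha]

theorem rightDeriv_le_of_lipschitzWith (hf : ConvexOn ℝ univ f) {K : NNReal}
    (hK : LipschitzWith K f) (a : ℝ) : derivWithin f (Ioi a) a ≤ K := by
  have hslope := hf.rightDeriv_le_slope_of_mem_interior (by simp) (mem_univ (a + 1))
    (lt_add_one a)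
  have hlip : |f (a + 1) - f a| ≤ K * |a + 1 - a| := by
    simpa only [Real.dist_eq] using hK.dist_le_mul (a + 1) a
  rw [slope_def_field, add_sub_cancel_left, div_one] at hslope
  rw [add_sub_cancel_left, abs_one, mul_one] at hlip
  exact hslope.trans ((le_abs_self _).trans hlip)

theorem monotone_rightDeriv (hf : ConvexOn ℝ univ f) :
    Monotone fun x ↦ derivWithin f (Ioi x) x := by
  simpa using hf.monotoneOn_rightDeriv

end ConvexOn

theorem Monotone.memLp_comp_of_bounded {α : Type*} [MeasurableSpace α] {m : Measure α}
    [IsFiniteMeasure m] {p : ENNReal} {φ : ℝ → ℝ} (hφ : Monotone φ) {C : ℝ}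
    (hC : ∀ x, |φ x| ≤ C) {g : α → ℝ} (hg : AEMeasurable g m) :
    MemLp (fun s ↦ φ (g s)) p m :=
  MemLp.of_bound (hφ.measurable.comp_aemeasurable hg).aestronglyMeasurable C
    (Filter.Eventually.of_forall fun s ↦ hC (g s))

theorem LipschitzWith.memLp_comp {α : Type*} [MeasurableSpace α] {m : Measure α}
    [IsFiniteMeasure m] {p : ENNReal} {K : NNReal} {φ : ℝ → ℝ} (hφ : LipschitzWith K φ)
    {g : α → ℝ} (hg : MemLp g p m) : MemLp (fun s ↦ φ (g s)) p m := by
  have hφ₀ : LipschitzWith K fun x ↦ φ x - φ 0 := by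
    intro x y
    simpa [edist_sub_right] using hφ x y
  convert (hφ₀.comp_memLp (by simp) hg).add (memLp_const (φ 0)) using 1
  ext s
  simp

instance : IsProbabilityMeasure mu0 := ⟨by simp [mu0]⟩

theorem toLp_comp_mem_coneC {φ : ℝ → ℝ} (hφ : Monotone φ) (hφ₀ : ∀ x, 0 ≤ φ x)
    {μ : Hsp} (hμ : μ ∈ coneC) (h : MemLp (fun s ↦ φ (μ s)) 2 mu0) : h.toLp _ ∈ coneC := by
  obtain ⟨g, hg, -, hμg⟩ := hμ
  refine ⟨φ ∘ g, hφ.comp_monotoneOn hg, fun x _ ↦ hφ₀ (g x), ?_⟩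
  filter_upwards [h.coeFn_toLp, hμg] with s hs hμs
  rw [hs, Function.comp_apply, hμs]

theorem integral_comp_le_of_sub_mem_dualC {ξ : ℝ → ℝ} {K : NNReal} (hK : LipschitzWith K ξ)
    (hmono : Monotone ξ) (hconv : ConvexOn ℝ univ ξ) {μ ν : Hsp} (hμ : μ ∈ coneC)
    (hνμ : ν - μ ∈ dualC) : ∫ s, ξ (μ s) ∂mu0 ≤ ∫ s, ξ (ν s) ∂mu0 := by
  set d : ℝ → ℝ := fun x ↦ derivWithin ξ (Ioi x) x
  have hd₀ : ∀ x, 0 ≤ d x := fun x ↦ (hmono.monotoneOn _).derivWithin_nonneg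
  have hdK : ∀ x, |d x| ≤ K := fun x ↦
    (abs_of_nonneg (hd₀ x)).trans_le (hconv.rightDeriv_le_of_lipschitzWith hK x)
  have hdμ : MemLp (fun s ↦ d (μ s)) 2 mu0 :=
    hconv.monotone_rightDeriv.memLp_comp_of_bounded hdK (Lp.aestronglyMeasurable μ).aemeasurable
  set ρ : Hsp := hdμ.toLp _
  have hinner : 0 ≤ inner ℝ (ν - μ) ρ :=
    hνμ ρ (toLp_comp_mem_coneC hconv.monotone_rightDeriv hd₀ hμ hdμ)
  have hint : ∀ f : Hsp, Integrable (fun s ↦ ξ (f s)) mu0 := fun f ↦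
    (hK.memLp_comp (Lp.memLp f)).integrable one_le_two
  have hpointwise : ∀ᵐ s ∂mu0, inner ℝ ((ν - μ) s) (ρ s) ≤ ξ (ν s) - ξ (μ s) := by
    filter_upwards [Lp.coeFn_sub ν μ, hdμ.coeFn_toLp] with s hsub hρ
    rw [hsub, hρ, Real.inner_apply, Pi.sub_apply, mul_comm]
    linarith [hconv.add_rightDeriv_mul_sub_le (a := μ s) (by simp) (mem_univ (ν s))]
  calc ∫ s, ξ (μ s) ∂mu0 ≤ ∫ s, ξ (μ s) ∂mu0 + inner ℝ (ν - μ) ρ := le_add_of_nonneg_right hinner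
    _ ≤ ∫ s, ξ (μ s) ∂mu0 + ∫ s, (ξ (ν s) - ξ (μ s)) ∂mu0 := by
      rw [L2.inner_def]
      exact add_le_add_right
        (integral_mono_ae (L2.integrable_inner _ _) ((hint ν).sub (hint μ)) hpointwise) _
    _ = ∫ s, ξ (ν s) ∂mu0 := by rw [integral_sub (hint ν) (hint μ)]; ring

theorem stmt10_general (ξb : ℝ → ℝ) (hlip : ∃ K : NNReal, LipschitzWith K ξb)
    (hmono : Monotone ξb)
    (hconv : ConvexOn ℝ Set.univ ξb)
    (μ : Hsp) (hμ : μ ∈ coneC) :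
    HH ξb μ = ((∫ s, ξb (μ s) ∂mu0 : ℝ) : EReal) := by
  obtain ⟨K, hK⟩ := hlip
  refine le_antisymm (sInf_le ⟨μ, hμ, ?_, rfl⟩) (le_sInf ?_)
  · intro ρ _
    simp
  · rintro _ ⟨ν, -, hνμ, rfl⟩
    exact_mod_cast integral_comp_le_of_sub_mem_dualC hK hmono hconv hμ hνμ

theorem stmt10 (ξb : ℝ → ℝ) (hlip : ∃ K : NNReal, LipschitzWith K ξb)
    (hmono : Monotone ξb) (hbdd : ∃ c : ℝ, ∀ r : ℝ, c ≤ ξb r)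
    (hconv : ConvexOn ℝ Set.univ ξb)
    (μ : Hsp) (hμ : μ ∈ coneC) :
    HH ξb μ = ((∫ s, ξb (μ s) ∂mu0 : ℝ) : EReal) :=
  stmt10_general ξb hlip hmono hconv μ hμ
end

section
/- Let ξ̄ : ℝ → ℝ be Lipschitz continuous, nondecreasing, bounded from below, and convex. Then 𝖧(ι) is finite for every ι ∈ H, the function 𝖧 : H → ℝ is bounded from below (by inf ξ̄), convex, and Lipschitz continuous with respect to the L² norm on H. -/
open MeasureTheory

/-!
The metric projection `P` onto the closed convex cone `C` satisfies `P ι - ι ∈ C*` and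
`‖P ι‖ ≤ ‖ι‖`, so every `ι` has feasible points. Feasibility of `(ι, ν)` is a convex
condition, so convexity of `ξ̄` passes to `𝖧`. If `ν` is feasible for `ι'`, then
`ν + P (ι - ι')` is feasible for `ι` and, as `ξ̄` is `K`-Lipschitz and `‖·‖₁ ≤ ‖·‖₂` on a
probability space, its cost exceeds that of `ν` by at most `K ‖ι - ι'‖`.

`C` is closed because an `L²`-convergent sequence has an a.e.-convergent subsequence, and a
function that is monotone and nonnegative on a full-measure subset `S` of `[0,1)` agrees on `S`
with the monotone function `x ↦ inf f(S ∩ [x, ∞))`.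
-/

open Filter Topology Set

theorem exists_mem_sub_mem_innerDual_norm_le {E : Type*} [NormedAddCommGroup E]
    [InnerProductSpace ℝ E] [CompleteSpace E] (C : ProperCone ℝ E) (x : E) :
    ∃ y ∈ C, y - x ∈ ProperCone.innerDual (C : Set E) ∧ ‖y‖ ≤ ‖x‖ := by
  obtain ⟨y, hy, hmin⟩ := exists_norm_eq_iInf_of_complete_convex C.nonempty
    C.isClosed.isComplete C.convex x
  have hproj := (norm_eq_iInf_iff_real_inner_le_zero C.convex hy).1 hmin
  refine ⟨y, hy, ProperCone.mem_innerDual.2 fun ρ hρ => ?_, ?_⟩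
  · have h := hproj (y + ρ) (C.add_mem hy hρ)
    rw [add_sub_cancel_left, ← neg_sub, inner_neg_left, real_inner_comm] at h
    linarith
  · have h := hproj 0 C.zero_mem
    rw [zero_sub, inner_neg_right, inner_sub_left, real_inner_self_eq_norm_sq] at h
    have := real_inner_le_norm x y
    nlinarith [norm_nonneg x, norm_nonneg y]

theorem EReal.sInf_image_coe {S : Set ℝ} (hne : S.Nonempty) (hbdd : BddBelow S) :
    sInf (((↑) : ℝ → EReal) '' S) = ↑(sInf S) := by
  refine IsGLB.sInf_eq ⟨?_, fun b hb => ?_⟩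
  · rintro _ ⟨r, hr, rfl⟩
    exact EReal.coe_le_coe_iff.2 (csInf_le hbdd hr)
  induction b using EReal.rec with
  | bot => exact bot_le
  | coe r =>
    exact EReal.coe_le_coe_iff.2
      (le_csInf hne fun x hx => EReal.coe_le_coe_iff.1 (hb ⟨x, hx, rfl⟩))
  | top =>
    obtain ⟨x, hx⟩ := hne
    exact absurd (hb ⟨x, hx, rfl⟩) (EReal.coe_lt_top x).not_ge

theorem Real.csInf_le_csInf_add {A B : Set ℝ} (hA : BddBelow A) (hB : B.Nonempty) {c : ℝ}
    (h : ∀ y ∈ B, ∃ x ∈ A, x ≤ y + c) : sInf A ≤ sInf B + c := by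
  suffices sInf A - c ≤ sInf B by linarith
  refine le_csInf hB fun y hy => ?_
  obtain ⟨x, hx, hxy⟩ := h y hy
  linarith [csInf_le hA hx]

theorem Real.csInf_le_mul_add_mul {A B C : Set ℝ} (hC : BddBelow C) (hA : A.Nonempty)
    (hB : B.Nonempty) {a b : ℝ} (ha : 0 ≤ a) (hb : 0 ≤ b)
    (h : ∀ x ∈ A, ∀ y ∈ B, ∃ z ∈ C, z ≤ a * x + b * y) :
    sInf C ≤ a * sInf A + b * sInf B := by
  have hA' : ∀ y ∈ B, sInf C - b * y ≤ a * sInf A := by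
    intro y hy
    rw [← smul_eq_mul a, ← Real.sInf_smul_of_nonneg ha]
    refine le_csInf (hA.smul_set) ?_
    rintro _ ⟨x, hx, rfl⟩
    obtain ⟨z, hz, hzle⟩ := h x hx y hy
    change _ ≤ a * x
    linarith [csInf_le hC hz]
  suffices sInf C - a * sInf A ≤ b * sInf B by linarith
  rw [← smul_eq_mul b, ← Real.sInf_smul_of_nonneg hb]
  refine le_csInf (hB.smul_set) ?_
  rintro _ ⟨y, hy, rfl⟩
  change _ ≤ b * y
  linarith [hA' y hy]

theorem MeasureTheory.Lp.integral_norm_le_norm {α : Type*} [MeasurableSpace α] {μ : Measure α}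
    [IsProbabilityMeasure μ] (w : Lp ℝ 2 μ) : ∫ s, ‖w s‖ ∂μ ≤ ‖w‖ := by
  rw [integral_norm_eq_lintegral_enorm (Lp.aestronglyMeasurable w),
    ← eLpNorm_one_eq_lintegral_enorm, Lp.norm_def]
  exact ENNReal.toReal_mono (Lp.eLpNorm_ne_top w)
    (eLpNorm_le_eLpNorm_of_exponent_le one_le_two (Lp.aestronglyMeasurable w))

namespace LipschitzWith

variable {α : Type*} [MeasurableSpace α] {μ : Measure α} {ξ : ℝ → ℝ} {K : NNReal}

theorem integrable_comp_Lp [IsFiniteMeasure μ] (hK : LipschitzWith K ξ) (f : Lp ℝ 2 μ) :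
    Integrable (fun s => ξ (f s)) μ := by
  refine Integrable.mono' (((Lp.memLp f).integrable one_le_two).norm.const_mul K |>.add
    (integrable_const ‖ξ 0‖)) (hK.continuous.comp_aestronglyMeasurable (Lp.aestronglyMeasurable f))
    (Eventually.of_forall fun s => ?_)
  have h := hK.dist_le_mul (f s) 0
  rw [dist_eq_norm, dist_eq_norm, sub_zero] at h
  simp only [Pi.add_apply]
  linarith [norm_le_insert' (ξ (f s)) (ξ 0)]

theorem integral_comp_add_le [IsProbabilityMeasure μ] (hK : LipschitzWith K ξ)
    (ν w : Lp ℝ 2 μ) :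
    ∫ s, ξ ((ν + w) s) ∂μ ≤ ∫ s, ξ (ν s) ∂μ + K * ‖w‖ := by
  have hw := ((Lp.memLp w).integrable one_le_two).norm.const_mul K
  have hle : (fun s => ξ ((ν + w) s)) ≤ᵐ[μ] fun s => ξ (ν s) + K * ‖w s‖ := by
    filter_upwards [Lp.coeFn_add ν w] with s hs
    rw [hs, Pi.add_apply]
    have h := hK.dist_le_mul (ν s + w s) (ν s)
    rw [dist_eq_norm, dist_eq_norm, add_sub_cancel_left] at h
    linarith [Real.le_norm_self (ξ (ν s + w s) - ξ (ν s))]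
  calc ∫ s, ξ ((ν + w) s) ∂μ ≤ ∫ s, ξ (ν s) + K * ‖w s‖ ∂μ :=
        integral_mono_ae (hK.integrable_comp_Lp _) ((hK.integrable_comp_Lp ν).add hw) hle
    _ = ∫ s, ξ (ν s) ∂μ + K * ∫ s, ‖w s‖ ∂μ := by
        rw [integral_add (hK.integrable_comp_Lp ν) hw, integral_const_mul]
    _ ≤ ∫ s, ξ (ν s) ∂μ + K * ‖w‖ := by
        gcongr
        exact Lp.integral_norm_le_norm w

theorem integral_comp_smul_add_smul_le [IsFiniteMeasure μ] (hK : LipschitzWith K ξ)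
    (hconv : ConvexOn ℝ univ ξ) (ν ν' : Lp ℝ 2 μ) {a b : ℝ} (ha : 0 ≤ a) (hb : 0 ≤ b)
    (hab : a + b = 1) :
    ∫ s, ξ ((a • ν + b • ν') s) ∂μ ≤ a * ∫ s, ξ (ν s) ∂μ + b * ∫ s, ξ (ν' s) ∂μ := by
  have hν := (hK.integrable_comp_Lp ν).const_mul a
  have hν' := (hK.integrable_comp_Lp ν').const_mul b
  have hle : (fun s => ξ ((a • ν + b • ν') s)) ≤ᵐ[μ]
      fun s => a * ξ (ν s) + b * ξ (ν' s) := by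
    filter_upwards [Lp.coeFn_add (a • ν) (b • ν'), Lp.coeFn_smul a ν, Lp.coeFn_smul b ν']
      with s hs hsν hsν'
    rw [hs, Pi.add_apply, hsν, hsν']
    exact hconv.2 (mem_univ _) (mem_univ _) ha hb hab
  calc ∫ s, ξ ((a • ν + b • ν') s) ∂μ ≤ ∫ s, a * ξ (ν s) + b * ξ (ν' s) ∂μ :=
        integral_mono_ae (hK.integrable_comp_Lp _) (hν.add hν') hle
    _ = a * ∫ s, ξ (ν s) ∂μ + b * ∫ s, ξ (ν' s) ∂μ := by
        rw [integral_add hν hν', integral_const_mul, integral_const_mul]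

end LipschitzWith

instance inst_s13 : IsProbabilityMeasure mu0 := ⟨by simp [mu0, Real.volume_Ico]⟩

theorem nonempty_inter_Ici_of_ae_mem {S : Set ℝ} (hS : ∀ᵐ s ∂mu0, s ∈ S) {x : ℝ}
    (hx : x ∈ Ico (0 : ℝ) 1) : (S ∩ Ici x).Nonempty := by
  have hpos : volume.restrict (Ico x 1) ≠ 0 := by
    simpa [Measure.restrict_eq_zero, Real.volume_Ico] using hx.2
  have hsub : Ico x 1 ⊆ Ico (0 : ℝ) 1 := Ico_subset_Ico_left hx.1
  have hS' : ∀ᵐ s ∂volume.restrict (Ico x 1), s ∈ S := by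
    rw [← Measure.restrict_restrict_of_subset hsub]
    exact ae_restrict_of_ae hS
  have := ae_neBot.2 hpos
  obtain ⟨s, hsS, hsx⟩ := (hS'.and (ae_restrict_mem measurableSet_Ico)).exists
  exact ⟨s, hsS, hsx.1⟩

theorem exists_monotoneOn_nonneg_ae_eq {f : ℝ → ℝ} {S : Set ℝ} (hS : ∀ᵐ s ∂mu0, s ∈ S)
    (hmono : MonotoneOn f S) (hnonneg : ∀ x ∈ S, 0 ≤ f x) :
    ∃ g : ℝ → ℝ, MonotoneOn g (Ico 0 1) ∧ (∀ x ∈ Ico (0 : ℝ) 1, 0 ≤ g x) ∧ f =ᵐ[mu0] g := by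
  have hbdd : ∀ x, BddBelow (f '' (S ∩ Ici x)) :=
    fun x => ⟨0, by rintro _ ⟨s, hs, rfl⟩; exact hnonneg s hs.1⟩
  refine ⟨fun x => sInf (f '' (S ∩ Ici x)), fun x _ y hy hxy => ?_, fun x hx => ?_, ?_⟩
  · exact csInf_le_csInf (hbdd x) ((nonempty_inter_Ici_of_ae_mem hS hy).image f)
      (image_mono (inter_subset_inter_right _ (Ici_subset_Ici.2 hxy)))
  · refine le_csInf ((nonempty_inter_Ici_of_ae_mem hS hx).image f) ?_
    rintro _ ⟨s, hs, rfl⟩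
    exact hnonneg s hs.1
  · filter_upwards [hS] with s hs
    have hleast : IsLeast (f '' (S ∩ Ici s)) (f s) := by
      refine ⟨mem_image_of_mem f ⟨hs, self_mem_Ici⟩, ?_⟩
      rintro _ ⟨t, ht, rfl⟩
      exact hmono hs ht.1 ht.2
    exact hleast.csInf_eq.symm

theorem isClosed_coneC : IsClosed coneC := by
  refine isSeqClosed_iff_isClosed.1 fun f f₀ hf hlim => ?_
  obtain ⟨ns, -, hae⟩ := (tendstoInMeasure_of_tendsto_Lp hlim).exists_seq_tendsto_ae
  choose g hgmono hgnonneg hfg using hf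
  set S : Set ℝ := {s | s ∈ Ico (0 : ℝ) 1 ∧ (∀ k, f (ns k) s = g (ns k) s) ∧
    Tendsto (fun k => g (ns k) s) atTop (𝓝 (f₀ s))}
  have hS : ∀ᵐ s ∂mu0, s ∈ S := by
    filter_upwards [ae_restrict_mem measurableSet_Ico, ae_all_iff.2 fun k => hfg (ns k), hae]
      with s hs hfgs hlims
    exact ⟨hs, hfgs, by simpa only [← hfgs] using hlims⟩
  refine exists_monotoneOn_nonneg_ae_eq hS (fun x hx y hy hxy => ?_) fun x hx => ?_
  · exact le_of_tendsto_of_tendsto' hx.2.2 hy.2.2 fun k => hgmono (ns k) hx.1 hy.1 hxy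
  · exact ge_of_tendsto' hx.2.2 fun k => hgnonneg (ns k) x hx.1

theorem add_mem_coneC {f g : Hsp} (hf : f ∈ coneC) (hg : g ∈ coneC) : f + g ∈ coneC := by
  obtain ⟨F, hFmono, hFnonneg, hfF⟩ := hf
  obtain ⟨G, hGmono, hGnonneg, hgG⟩ := hg
  refine ⟨F + G, hFmono.add hGmono, fun x hx => add_nonneg (hFnonneg x hx) (hGnonneg x hx), ?_⟩
  filter_upwards [Lp.coeFn_add f g, hfF, hgG] with x hfg hf hg
  rw [hfg, Pi.add_apply, Pi.add_apply, hf, hg]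

theorem smul_mem_coneC {f : Hsp} {c : ℝ} (hc : 0 ≤ c) (hf : f ∈ coneC) : c • f ∈ coneC := by
  obtain ⟨F, hFmono, hFnonneg, hfF⟩ := hf
  refine ⟨c • F, fun x hx y hy hxy => mul_le_mul_of_nonneg_left (hFmono hx hy hxy) hc,
    fun x hx => mul_nonneg hc (hFnonneg x hx), ?_⟩
  filter_upwards [Lp.coeFn_smul c f, hfF] with x hcf hf
  rw [hcf, Pi.smul_apply, Pi.smul_apply, hf]

def properConeC : ProperCone ℝ Hsp where
  carrier := coneC
  add_mem' := add_mem_coneC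
  zero_mem' := ⟨0, monotoneOn_const, fun _ _ => le_rfl, Lp.coeFn_zero ℝ 2 mu0⟩
  smul_mem' c _ hf := smul_mem_coneC c.2 hf
  isClosed' := isClosed_coneC

theorem dualC_eq_innerDual : dualC = ProperCone.innerDual (properConeC : Set Hsp) := by
  ext ι
  simp only [dualC, SetLike.mem_coe, ProperCone.mem_innerDual, real_inner_comm]
  rfl

def feasibleValues (ξb : ℝ → ℝ) (ι : Hsp) : Set ℝ :=
  (fun ν : Hsp => ∫ s, ξb (ν s) ∂mu0) '' {ν | ν ∈ coneC ∧ ν - ι ∈ dualC}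

theorem HH_eq_sInf_image_coe (ξb : ℝ → ℝ) (ι : Hsp) :
    HH ξb ι = sInf (((↑) : ℝ → EReal) '' feasibleValues ξb ι) := by
  rw [HH, feasibleValues, image_image]
  congr 1
  ext x
  simp only [mem_ofPred_eq, mem_image, and_assoc, eq_comm]

theorem feasibleValues_nonempty (ξb : ℝ → ℝ) (ι : Hsp) : (feasibleValues ξb ι).Nonempty := by
  obtain ⟨ν, hν, hνι, -⟩ := exists_mem_sub_mem_innerDual_norm_le properConeC ι
  exact ⟨_, ν, ⟨hν, dualC_eq_innerDual ▸ hνι⟩, rfl⟩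

section feasibleValues

variable {ξb : ℝ → ℝ} {K : NNReal}

theorem sInf_range_mem_lowerBounds_feasibleValues (hK : LipschitzWith K ξb)
    (hbdd : BddBelow (range ξb)) (ι : Hsp) :
    sInf (range ξb) ∈ lowerBounds (feasibleValues ξb ι) := by
  rintro _ ⟨ν, -, rfl⟩
  simpa using integral_mono (integrable_const _) (hK.integrable_comp_Lp ν)
    fun s => csInf_le hbdd (mem_range_self (ν s))

theorem HH_eq_coe_sInf_feasibleValues (hK : LipschitzWith K ξb) (hbdd : BddBelow (range ξb))
    (ι : Hsp) : HH ξb ι = ↑(sInf (feasibleValues ξb ι)) := by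
  rw [HH_eq_sInf_image_coe, EReal.sInf_image_coe (feasibleValues_nonempty ξb ι)
    ⟨_, sInf_range_mem_lowerBounds_feasibleValues hK hbdd ι⟩]

theorem exists_mem_feasibleValues_le_add_mul_norm (hK : LipschitzWith K ξb) (ι ι' : Hsp) :
    ∀ y ∈ feasibleValues ξb ι', ∃ x ∈ feasibleValues ξb ι, x ≤ y + K * ‖ι - ι'‖ := by
  rintro _ ⟨ν, ⟨hν, hνι'⟩, rfl⟩
  obtain ⟨w, hw, hwι, hw_norm⟩ := exists_mem_sub_mem_innerDual_norm_le properConeC (ι - ι')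
  refine ⟨_, ⟨ν + w, ⟨add_mem_coneC hν hw, ?_⟩, rfl⟩, ?_⟩
  · rw [dualC_eq_innerDual] at hνι' ⊢
    rw [show ν + w - ι = (ν - ι') + (w - (ι - ι')) by abel]
    exact (ProperCone.innerDual _).add_mem hνι' hwι
  · calc ∫ s, ξb ((ν + w) s) ∂mu0 ≤ ∫ s, ξb (ν s) ∂mu0 + K * ‖w‖ := hK.integral_comp_add_le ν w
      _ ≤ ∫ s, ξb (ν s) ∂mu0 + K * ‖ι - ι'‖ := by gcongr

theorem exists_mem_feasibleValues_le_mul_add_mul (hK : LipschitzWith K ξb)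
    (hconv : ConvexOn ℝ univ ξb) (ι ι' : Hsp) {a b : ℝ} (ha : 0 ≤ a) (hb : 0 ≤ b)
    (hab : a + b = 1) :
    ∀ x ∈ feasibleValues ξb ι, ∀ y ∈ feasibleValues ξb ι',
      ∃ z ∈ feasibleValues ξb (a • ι + b • ι'), z ≤ a * x + b * y := by
  rintro _ ⟨ν, ⟨hν, hνι⟩, rfl⟩ _ ⟨ν', ⟨hν', hνι'⟩, rfl⟩
  refine ⟨_, ⟨a • ν + b • ν', ⟨properConeC.convex hν hν' ha hb hab, ?_⟩, rfl⟩,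
    hK.integral_comp_smul_add_smul_le hconv ν ν' ha hb hab⟩
  rw [dualC_eq_innerDual] at hνι hνι' ⊢
  rw [show a • ν + b • ν' - (a • ι + b • ι') = a • (ν - ι) + b • (ν' - ι') by
    simp only [smul_sub]; abel]
  exact (ProperCone.innerDual _).add_mem ((ProperCone.innerDual _).smul_mem hνι ha)
    ((ProperCone.innerDual _).smul_mem hνι' hb)

end feasibleValues

theorem stmt13_general (ξb : ℝ → ℝ) (hlip : ∃ K : NNReal, LipschitzWith K ξb)
    (hbdd : ∃ c : ℝ, ∀ r : ℝ, c ≤ ξb r)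
    (hconv : ConvexOn ℝ Set.univ ξb) :
    (∀ ι : Hsp, ∃ x : ℝ, HH ξb ι = (x : EReal)) ∧
    (∀ ι : Hsp, ((sInf (Set.range ξb) : ℝ) : EReal) ≤ HH ξb ι) ∧
    ConvexOn ℝ Set.univ (fun ι : Hsp => (HH ξb ι).toReal) ∧
    (∃ K : NNReal, LipschitzWith K (fun ι : Hsp => (HH ξb ι).toReal)) := by
  obtain ⟨K, hK⟩ := hlip
  have hrange : BddBelow (range ξb) := by
    obtain ⟨c, hc⟩ := hbdd
    exact ⟨c, by rintro _ ⟨r, rfl⟩; exact hc r⟩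
  have hHH := HH_eq_coe_sInf_feasibleValues hK hrange
  have hbddF : ∀ ι, BddBelow (feasibleValues ξb ι) :=
    fun ι => ⟨_, sInf_range_mem_lowerBounds_feasibleValues hK hrange ι⟩
  have htoReal : (fun ι : Hsp => (HH ξb ι).toReal) = fun ι => sInf (feasibleValues ξb ι) := by
    simp only [hHH, EReal.toReal_coe]
  rw [htoReal]
  refine ⟨fun ι => ⟨_, hHH ι⟩, fun ι => ?_, ⟨convex_univ, fun ι _ ι' _ a b ha hb hab => ?_⟩,
    ⟨K, LipschitzWith.of_le_add_mul K fun ι ι' => ?_⟩⟩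
  · rw [hHH, EReal.coe_le_coe_iff]
    exact le_csInf (feasibleValues_nonempty ξb ι)
      (sInf_range_mem_lowerBounds_feasibleValues hK hrange ι)
  · exact Real.csInf_le_mul_add_mul (hbddF _) (feasibleValues_nonempty ξb ι)
      (feasibleValues_nonempty ξb ι') ha hb
      (exists_mem_feasibleValues_le_mul_add_mul hK hconv ι ι' ha hb hab)
  · rw [dist_eq_norm]
    exact Real.csInf_le_csInf_add (hbddF ι) (feasibleValues_nonempty ξb ι')
      (exists_mem_feasibleValues_le_add_mul_norm hK ι ι')

theorem stmt13 (ξb : ℝ → ℝ) (hlip : ∃ K : NNReal, LipschitzWith K ξb)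
    (hmono : Monotone ξb) (hbdd : ∃ c : ℝ, ∀ r : ℝ, c ≤ ξb r)
    (hconv : ConvexOn ℝ Set.univ ξb) :
    (∀ ι : Hsp, ∃ x : ℝ, HH ξb ι = (x : EReal)) ∧
    (∀ ι : Hsp, ((sInf (Set.range ξb) : ℝ) : EReal) ≤ HH ξb ι) ∧
    ConvexOn ℝ Set.univ (fun ι : Hsp => (HH ξb ι).toReal) ∧
    (∃ K : NNReal, LipschitzWith K (fun ι : Hsp => (HH ξb ι).toReal)) :=
  stmt13_general ξb hlip hbdd hconv
end
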